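/- arXiv:0801.0059 — 3 statements merged into one kernel-verified Lean document; each statement's English description precedes it below -/
import Mathlib

section
/- Let M be a positive integer and let G be a monic real polynomial of degree d with 1 ≤ d < M. Then ∑_{i=0}^{M-1} G(i)^2 ≥ binom(2d,d)^{-2} · M(M^2-1^2)(M^2-2^2)···(M^2-d^2)/(2d+1). -/
/-!
Let `W(x) = x(x-1)⋯(x-d+1) · y(y-1)⋯(y-d+1)` with `y = M + d - 1 - x`. It has degree `2d`,
leading coefficient `(-1)^d`, and vanishes at `0, …, d-1` and at `M, …, M+d-1`, so `d`-fold
summation by parts over `0, …, M-1` gives, for every `g`,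
`∑ Δ^d W · g = (-1)^d ∑ W(x+d) · Δ^d g(x)`. Hence the discrete Chebyshev polynomial
`t = Δ^d W` pairs with any `g` whose `d`-th difference is a constant `c` to `(-1)^d c K`, where
`K = ∑ W(x+d) = (d!)² C(M+d, 2d+1)` by the upper Chu–Vandermonde identity. Taking `g = G`
(`c = d!`) and `g = t` (`c = (-1)^d (2d)!`), Cauchy–Schwarz gives
`∑ G² ≥ (∑ t G)² / ∑ t² = (d!)² K / (2d)!`, and `M ∏ (M² - i²) = (M+d)(M+d-1)⋯(M-d)` turns this
into the stated bound.
-/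

open Finset Polynomial fwdDiff
open scoped Nat

theorem fwdDiff_iter_eq_zero_of_forall_le {M G : Type*} [AddCommMonoid M] [AddCommGroup G]
    (h : M) {f : M → G} {n : ℕ} {y : M} (hf : ∀ k ≤ n, f (y + k • h) = 0) :
    Δ_[h] ^[n] f y = 0 := by
  rw [fwdDiff_iter_eq_sum_shift]
  exact sum_eq_zero fun k hk ↦ by rw [hf k (Nat.lt_succ_iff.mp (mem_range.mp hk)), smul_zero]

section SummationByParts

variable {R : Type*} [CommRing R]

theorem sum_range_fwdDiff_mul (f g : R → R) (N : ℕ) :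
    ∑ x ∈ range N, Δ_[1] f x * g x =
      f N * g N - f 0 * g 0 - ∑ x ∈ range N, f (x + 1) * Δ_[1] g x := by
  induction N with
  | zero => simp
  | succ N ih =>
    rw [sum_range_succ, ih, sum_range_succ]
    simp only [fwdDiff, Nat.cast_succ]
    ring

theorem sum_range_fwdDiff_iter_mul {f : R → R} {n N : ℕ} (h0 : ∀ k < n, f k = 0)
    (hN : ∀ k < n, f (N + k) = 0) (g : R → R) :
    ∑ x ∈ range N, Δ_[1] ^[n] f x * g x =
      (-1) ^ n * ∑ x ∈ range N, f (x + n) * Δ_[1] ^[n] g x := by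
  induction n generalizing f g with
  | zero => simp
  | succ n ih =>
    have hvanish : ∀ y : R, (∀ k < n + 1, f (y + k) = 0) → Δ_[1] ^[n] f y = 0 := fun y hy ↦
      fwdDiff_iter_eq_zero_of_forall_le 1 fun k hk ↦ by
        simpa using hy k (Nat.lt_succ_of_le hk)
    have hshift : ∀ x : R, Δ_[1] ^[n] f (x + 1) = Δ_[1] ^[n] (fun r ↦ f (r + 1)) x := fun x ↦
      (fwdDiff_iter_comp_add 1 f 1 n x).symm
    rw [Function.iterate_succ_apply', sum_range_fwdDiff_mul,
      hvanish N fun k hk ↦ hN k hk, hvanish 0 fun k hk ↦ by simpa using h0 k hk]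
    simp only [hshift]
    rw [ih (fun k hk ↦ by exact_mod_cast h0 (k + 1) (by omega))
      (fun k hk ↦ by simpa [add_assoc] using hN (k + 1) (by omega)), ← Function.iterate_succ_apply]
    simp only [zero_mul, sub_self, zero_sub, pow_succ, Nat.cast_succ, add_assoc]
    ring

end SummationByParts

theorem Ring.choose_neg_natCast_add_one (a k : ℕ) :
    Ring.choose (-(a + 1 : ℤ)) k = (-1) ^ k * ((k + a).choose a : ℤ) := by
  rw [Ring.choose_neg, show (a + 1 : ℤ) + k - 1 = ((k + a : ℕ) : ℤ) by push_cast; ring,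
    Ring.choose_natCast, Nat.choose_symm_add, Units.smul_def, zsmul_eq_mul,
    Int.coe_negOnePow_natCast]
  push_cast
  rfl

/-- Chu–Vandermonde at the negative arguments `-(p+1)` and `-(q+1)`. -/
theorem Nat.sum_antidiagonal_add_choose_mul_add_choose (p q n : ℕ) :
    ∑ ij ∈ antidiagonal n, (ij.1 + p).choose p * (ij.2 + q).choose q =
      (n + p + q + 1).choose (p + q + 1) := by
  have h := Ring.add_choose_eq (r := -(p + 1 : ℤ)) (s := -(q + 1 : ℤ)) n (Commute.all _ _)
  rw [show -(p + 1 : ℤ) + -(q + 1) = -((p + q + 1 : ℕ) + 1) by push_cast; ring] at h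
  simp only [Ring.choose_neg_natCast_add_one] at h
  have hsign : ∀ ij ∈ antidiagonal n, ((-1) ^ ij.1 * ((ij.1 + p).choose p : ℤ)) *
      ((-1) ^ ij.2 * ((ij.2 + q).choose q : ℤ)) =
      (-1) ^ n * (((ij.1 + p).choose p * (ij.2 + q).choose q : ℕ) : ℤ) := by
    intro ij hij
    rw [← mem_antidiagonal.mp hij, pow_add]
    push_cast
    ring
  rw [sum_congr rfl hsign, ← mul_sum] at h
  have h' := mul_left_cancel₀ (pow_ne_zero n (by norm_num : (-1 : ℤ) ≠ 0)) h
  rw [show n + (p + q + 1) = n + p + q + 1 by ring] at h'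
  exact_mod_cast h'.symm

theorem Nat.sum_range_descFactorial_mul_descFactorial {d N : ℕ} (hdN : d < N) :
    ∑ x ∈ range N, (x + d).descFactorial d * (N - 1 - x).descFactorial d =
      d ! ^ 2 * (N + d).choose (2 * d + 1) := by
  obtain ⟨n, rfl⟩ : ∃ n, N = n + 1 + d := ⟨N - 1 - d, by omega⟩
  have htail : ∀ y ∈ range d,
      (n + 1 + y + d).descFactorial d * (n + 1 + d - 1 - (n + 1 + y)).descFactorial d = 0 :=
    fun y hy ↦ mul_eq_zero_of_right _
      (Nat.descFactorial_eq_zero_iff_lt.mpr (by have := mem_range.mp hy; omega))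
  have hhead : ∀ x ∈ range (n + 1),
      (x + d).descFactorial d * (n + 1 + d - 1 - x).descFactorial d =
        d ! ^ 2 * ((x + d).choose d * (n - x + d).choose d) := fun x hx ↦ by
    rw [show n + 1 + d - 1 - x = n - x + d by have := mem_range.mp hx; omega,
      Nat.descFactorial_eq_factorial_mul_choose, Nat.descFactorial_eq_factorial_mul_choose]
    ring
  rw [sum_range_add, sum_eq_zero htail, add_zero, sum_congr rfl hhead, ← mul_sum,
    ← Nat.sum_antidiagonal_eq_sum_range_succ (fun i j ↦ (i + d).choose d * (j + d).choose d),
    Nat.sum_antidiagonal_add_choose_mul_add_choose]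
  congr 2 <;> ring

section Polynomials

variable {R : Type*} [CommRing R]

theorem mul_prod_Icc_sq_sub_sq (x : R) (d : ℕ) :
    x * ∏ i ∈ Icc 1 d, (x ^ 2 - (i : R) ^ 2) = (descPochhammer R (2 * d + 1)).eval (x + d) := by
  induction d with
  | zero => simp
  | succ d ih =>
    have hshift : (descPochhammer R (2 * d + 2)).eval (x + (d + 1 : ℕ)) =
        (x + (d + 1)) * (descPochhammer R (2 * d + 1)).eval (x + d) := by
      rw [descPochhammer_succ_left]
      simp only [eval_mul, eval_X, eval_comp, eval_sub, eval_one]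
      push_cast
      ring_nf
    rw [prod_Icc_succ_top (by omega), ← mul_assoc, ih,
      show 2 * (d + 1) + 1 = 2 * d + 2 + 1 by ring, descPochhammer_succ_eval (2 * d + 2), hshift]
    push_cast
    ring

theorem natCast_mul_prod_Icc_sq_sub_sq (N d : ℕ) :
    (N : R) * ∏ i ∈ Icc 1 d, ((N : R) ^ 2 - (i : R) ^ 2) =
      ((2 * d + 1)! * (N + d).choose (2 * d + 1) : ℕ) := by
  rw [mul_prod_Icc_sq_sub_sq, ← Nat.cast_add, descPochhammer_eval_eq_descFactorial,
    Nat.descFactorial_eq_factorial_mul_choose]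

theorem natDegree_C_sub_X [Nontrivial R] (a : R) : (C a - X).natDegree = 1 := by
  rw [← neg_sub, natDegree_neg, natDegree_X_sub_C]

theorem leadingCoeff_C_sub_X [Nontrivial R] (a : R) : (C a - X).leadingCoeff = -1 := by
  rw [← neg_sub, leadingCoeff_neg, leadingCoeff_X_sub_C]

theorem leadingCoeff_descPochhammer_comp_C_sub_X [IsDomain R] (d : ℕ) (a : R) :
    ((descPochhammer R d).comp (C a - X)).leadingCoeff = (-1) ^ d := by
  rw [leadingCoeff_comp (by rw [natDegree_C_sub_X]; exact one_ne_zero),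
    (monic_descPochhammer R d).leadingCoeff, leadingCoeff_C_sub_X, descPochhammer_natDegree,
    one_mul]

end Polynomials

/-- Up to sign, `Δ_[1] ^[d]` of this polynomial is the discrete Chebyshev polynomial of degree `d`
for the points `0, …, N-1` (discrete Rodrigues formula). -/
noncomputable def rodriguesWeight (R : Type*) [CommRing R] (N d : ℕ) : R[X] :=
  descPochhammer R d * (descPochhammer R d).comp (C ((N : R) + d - 1) - X)

section RodriguesWeight

variable {R : Type*} [CommRing R]

theorem rodriguesWeight_eval (N d : ℕ) (y : R) :
    (rodriguesWeight R N d).eval y =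
      (descPochhammer R d).eval y * (descPochhammer R d).eval (N + d - 1 - y) := by
  simp [rodriguesWeight]

theorem rodriguesWeight_eval_natCast_of_lt (N : ℕ) {d k : ℕ} (hk : k < d) :
    (rodriguesWeight R N d).eval (k : R) = 0 := by
  rw [rodriguesWeight_eval, descPochhammer_eval_coe_nat_of_lt hk, zero_mul]

theorem rodriguesWeight_eval_add_natCast_of_lt (N : ℕ) {d k : ℕ} (hk : k < d) :
    (rodriguesWeight R N d).eval (N + k : R) = 0 := by
  have h : (N + d - 1 - (N + k) : R) = ((d - 1 - k : ℕ) : R) := by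
    rw [Nat.cast_sub (by omega), Nat.cast_sub (by omega)]
    ring
  rw [rodriguesWeight_eval, h, descPochhammer_eval_coe_nat_of_lt (by omega), mul_zero]

theorem rodriguesWeight_eval_natCast_add (N d : ℕ) {x : ℕ} (hx : x < N) :
    (rodriguesWeight R N d).eval (x + d : R) =
      ((x + d).descFactorial d * (N - 1 - x).descFactorial d : ℕ) := by
  have h : (N + d - 1 - (x + d) : R) = ((N - 1 - x : ℕ) : R) := by
    rw [Nat.cast_sub (by omega), Nat.cast_sub (by omega)]
    ring
  rw [rodriguesWeight_eval, h, ← Nat.cast_add, descPochhammer_eval_eq_descFactorial,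
    descPochhammer_eval_eq_descFactorial, Nat.cast_mul]

theorem sum_fwdDiff_iter_rodriguesWeight_mul {d N : ℕ} (hdN : d < N) {g : R → R} {c : R}
    (hg : Δ_[1] ^[d] g = fun _ ↦ c) :
    ∑ x ∈ range N, Δ_[1] ^[d] (rodriguesWeight R N d).eval x * g x =
      (-1) ^ d * c * (d ! ^ 2 * (N + d).choose (2 * d + 1) : ℕ) := by
  have hweight : ∀ x ∈ range N, (rodriguesWeight R N d).eval ((x : R) + d) * c =
      c * ((x + d).descFactorial d * (N - 1 - x).descFactorial d : ℕ) := fun x hx ↦ by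
    rw [rodriguesWeight_eval_natCast_add N d (mem_range.mp hx), mul_comm]
  rw [sum_range_fwdDiff_iter_mul (fun k hk ↦ rodriguesWeight_eval_natCast_of_lt N hk)
      (fun k hk ↦ rodriguesWeight_eval_add_natCast_of_lt N hk), hg, sum_congr rfl hweight,
    ← mul_sum, ← Nat.cast_sum, Nat.sum_range_descFactorial_mul_descFactorial hdN, mul_assoc]

variable [IsDomain R]

theorem leadingCoeff_rodriguesWeight (N d : ℕ) :
    (rodriguesWeight R N d).leadingCoeff = (-1) ^ d := by
  rw [rodriguesWeight, leadingCoeff_mul, (monic_descPochhammer R d).leadingCoeff,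
    leadingCoeff_descPochhammer_comp_C_sub_X, one_mul]

theorem natDegree_rodriguesWeight (N d : ℕ) : (rodriguesWeight R N d).natDegree = 2 * d := by
  have hcomp : (descPochhammer R d).comp (C ((N : R) + d - 1) - X) ≠ 0 := by
    rw [← leadingCoeff_ne_zero, leadingCoeff_descPochhammer_comp_C_sub_X]
    exact pow_ne_zero d (neg_ne_zero.mpr one_ne_zero)
  rw [rodriguesWeight, natDegree_mul (monic_descPochhammer R d).ne_zero hcomp, natDegree_comp,
    natDegree_C_sub_X, descPochhammer_natDegree]
  ring

end RodriguesWeight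

theorem sq_sum_mul_div_sum_sq_le {ι 𝕜 : Type*} [Field 𝕜] [LinearOrder 𝕜] [IsStrictOrderedRing 𝕜]
    (s : Finset ι) (f g : ι → 𝕜) :
    (∑ i ∈ s, f i * g i) ^ 2 / ∑ i ∈ s, f i ^ 2 ≤ ∑ i ∈ s, g i ^ 2 := by
  rcases (sum_nonneg fun i _ ↦ sq_nonneg (f i) : 0 ≤ ∑ i ∈ s, f i ^ 2).eq_or_lt with h | h
  · rw [← h, div_zero]
    exact sum_nonneg fun i _ ↦ sq_nonneg (g i)
  · rw [div_le_iff₀' h]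
    exact sum_mul_sq_le_sq_mul_sq s f g

theorem stmt5_general (M : ℕ) (G : Polynomial ℝ) (d : ℕ)
    (hmonic : G.Monic) (hdeg : G.natDegree = d) (hdM : d < M) :
    ((Nat.choose (2 * d) d : ℝ))⁻¹ ^ 2 *
        ((M : ℝ) * ∏ i ∈ Finset.Icc 1 d, ((M : ℝ) ^ 2 - (i : ℝ) ^ 2)) / (2 * (d : ℝ) + 1) ≤
      ∑ i ∈ Finset.range M, (G.eval (i : ℝ)) ^ 2 := by
  have hG : Δ_[1] ^[d] G.eval = fun _ ↦ (d ! : ℝ) := by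
    rw [← hdeg, G.fwdDiff_iter_degree_eq_factorial, hmonic.leadingCoeff, one_smul]
    rfl
  have ht : Δ_[1] ^[d] (Δ_[1] ^[d] (rodriguesWeight ℝ M d).eval) =
      fun _ ↦ (-1) ^ d * ((2 * d) ! : ℝ) := by
    rw [← Function.iterate_add_apply, ← two_mul, ← natDegree_rodriguesWeight (R := ℝ) M d,
      fwdDiff_iter_degree_eq_factorial, leadingCoeff_rodriguesWeight, natDegree_rodriguesWeight]
    rfl
  have htG := sum_fwdDiff_iter_rodriguesWeight_mul hdM hG
  have htt := sum_fwdDiff_iter_rodriguesWeight_mul hdM ht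
  set t := Δ_[1] ^[d] (rodriguesWeight ℝ M d).eval
  have hsign : ((-1 : ℝ) ^ d) ^ 2 = 1 := by rw [← pow_mul, mul_comm, pow_mul, neg_one_sq, one_pow]
  have hcentral : ((2 * d) ! : ℝ) = (2 * d).choose d * d ! * d ! := by
    rw [two_mul]
    exact_mod_cast (Nat.add_choose_mul_factorial_mul_factorial d d).symm
  have hchoose : ((M + d).choose (2 * d + 1) : ℝ) ≠ 0 := by
    exact_mod_cast (Nat.choose_pos (by omega)).ne'
  have hodd : (2 * d + 1 : ℝ) ≠ 0 := by positivity
  calc _ = (∑ x ∈ range M, t x * G.eval (x : ℝ)) ^ 2 / ∑ x ∈ range M, t x ^ 2 := by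
        simp only [sq (t _), htG, htt, natCast_mul_prod_Icc_sq_sub_sq, Nat.factorial_succ,
          Nat.cast_mul, hcentral]
        rw [← mul_assoc ((-1 : ℝ) ^ d), ← sq, hsign, one_mul, mul_pow, mul_pow, hsign, one_mul]
        push_cast
        field_simp
    _ ≤ _ := sq_sum_mul_div_sum_sq_le (range M) (fun x : ℕ ↦ t x) (fun x : ℕ ↦ G.eval (x : ℝ))

theorem stmt5 (M : ℕ) (hM : 0 < M) (G : Polynomial ℝ) (d : ℕ)
    (hmonic : G.Monic) (hdeg : G.natDegree = d) (hd1 : 1 ≤ d) (hdM : d < M) :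
    ((Nat.choose (2 * d) d : ℝ))⁻¹ ^ 2 *
        ((M : ℝ) * ∏ i ∈ Finset.Icc 1 d, ((M : ℝ) ^ 2 - (i : ℝ) ^ 2)) / (2 * (d : ℝ) + 1) ≤
      ∑ i ∈ Finset.range M, (G.eval (i : ℝ)) ^ 2 :=
  stmt5_general M G d hmonic hdeg hdM
end

section
/- For every integer d ≥ 1 and real M > 0 with d ≤ M/2 and d/M ≤ 1/4 (componentwise: i/M ≤ 1/4 for all i ≤ d), one has binom(2d,d)^{-2} · M(M^2-1^2)···(M^2-d^2)/(2d+1) ≥ (M/4)^{2d+1} · exp(-2d^3/M^2). -/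
/-!
Since `d ≤ M / 2`, every ratio `x = i² / M²` with `i ≤ d` is at most `1 / 2`, where
`1 - x ≥ exp (-2x)`. Hence `∏ (M² - i²) ≥ M^{2d} exp (-2 ∑ i² / M²) ≥ M^{2d} exp (-2d³ / M²)`,
and the binomial factor is absorbed by `(2d + 1) binom(2d, d)² ≤ 16^d`, proved by induction from
`(n + 1) binom(2n + 2, n + 1) = 2 (2n + 1) binom(2n, n)`.
-/

open Finset

theorem Nat.two_mul_add_one_mul_centralBinom_sq_le (n : ℕ) :
    (2 * n + 1) * n.centralBinom ^ 2 ≤ 16 ^ n := by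
  induction n with
  | zero => simp
  | succ n ih =>
    refine Nat.le_of_mul_le_mul_right (c := (n + 1) ^ 2) ?_ (by positivity)
    calc (2 * (n + 1) + 1) * (n + 1).centralBinom ^ 2 * (n + 1) ^ 2
        = 4 * (2 * n + 1) * (2 * n + 3) * ((2 * n + 1) * n.centralBinom ^ 2) := by
          linear_combination (2 * n + 3) * ((n + 1) * (n + 1).centralBinom
            + 2 * (2 * n + 1) * n.centralBinom) * Nat.succ_mul_centralBinom_succ n
      _ ≤ 4 * (2 * n + 1) * (2 * n + 3) * 16 ^ n := Nat.mul_le_mul_left _ ih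
      _ ≤ 16 ^ (n + 1) * (n + 1) ^ 2 := by rw [pow_succ]; nlinarith

theorem two_mul_add_one_mul_choose_sq_le_four_pow (d : ℕ) :
    (2 * (d : ℝ) + 1) * (Nat.choose (2 * d) d : ℝ) ^ 2 ≤ 4 ^ (2 * d + 1) := by
  have h : ((2 * d + 1) * d.centralBinom ^ 2 : ℕ) ≤ (16 ^ d : ℝ) := by
    exact_mod_cast Nat.two_mul_add_one_mul_centralBinom_sq_le d
  rw [Nat.centralBinom_eq_two_mul_choose] at h
  push_cast at h
  have h16 : (16 : ℝ) ^ d ≤ 4 ^ (2 * d + 1) := by rw [pow_succ, pow_mul]; norm_num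
  linarith

theorem Real.exp_neg_two_mul_le_one_sub {x : ℝ} (h0 : 0 ≤ x) (h1 : x ≤ 1 / 2) :
    exp (-(2 * x)) ≤ 1 - x := by
  calc exp (-(2 * x)) = (exp (2 * x))⁻¹ := exp_neg _
    _ ≤ (1 + 2 * x)⁻¹ := inv_anti₀ (by positivity) (by linarith [add_one_le_exp (2 * x)])
    _ ≤ 1 - x := by
      rw [inv_le_iff_one_le_mul₀ (by positivity)]
      nlinarith

theorem sq_mul_exp_le_sq_sub_sq {M t : ℝ} (hM : 0 < M) (ht : 2 * t ^ 2 ≤ M ^ 2) :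
    M ^ 2 * Real.exp (-2 * t ^ 2 / M ^ 2) ≤ M ^ 2 - t ^ 2 := by
  have hx : t ^ 2 / M ^ 2 ≤ 1 / 2 := by
    rw [div_le_iff₀ (by positivity)]; linarith
  calc M ^ 2 * Real.exp (-2 * t ^ 2 / M ^ 2) = M ^ 2 * Real.exp (-(2 * (t ^ 2 / M ^ 2))) := by
        ring_nf
    _ ≤ M ^ 2 * (1 - t ^ 2 / M ^ 2) := by
        gcongr; exact Real.exp_neg_two_mul_le_one_sub (by positivity) hx
    _ = M ^ 2 - t ^ 2 := by field_simp

theorem sum_Icc_one_sq_le_cube (d : ℕ) : ∑ i ∈ Icc 1 d, i ^ 2 ≤ d ^ 3 :=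
  calc ∑ i ∈ Icc 1 d, i ^ 2 ≤ ∑ _i ∈ Icc 1 d, d ^ 2 :=
        sum_le_sum fun i hi => Nat.pow_le_pow_left (mem_Icc.1 hi).2 2
    _ = d ^ 3 := by simp; ring

theorem pow_mul_exp_le_prod_sq_sub_sq (d : ℕ) {M : ℝ} (hM : 0 < M)
    (hd : 2 * (d : ℝ) ^ 2 ≤ M ^ 2) :
    (M ^ 2) ^ d * Real.exp (-2 * (d : ℝ) ^ 3 / M ^ 2) ≤ ∏ i ∈ Icc 1 d, (M ^ 2 - (i : ℝ) ^ 2) := by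
  have hsum : -2 * (d : ℝ) ^ 3 / M ^ 2 ≤ ∑ i ∈ Icc 1 d, -2 * (i : ℝ) ^ 2 / M ^ 2 := by
    rw [← sum_div, ← mul_sum]
    have : ∑ i ∈ Icc 1 d, (i : ℝ) ^ 2 ≤ (d : ℝ) ^ 3 := by exact_mod_cast sum_Icc_one_sq_le_cube d
    gcongr ?_ / _
    linarith
  calc (M ^ 2) ^ d * Real.exp (-2 * (d : ℝ) ^ 3 / M ^ 2)
      ≤ (M ^ 2) ^ d * Real.exp (∑ i ∈ Icc 1 d, -2 * (i : ℝ) ^ 2 / M ^ 2) := by gcongr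
    _ = ∏ i ∈ Icc 1 d, M ^ 2 * Real.exp (-2 * (i : ℝ) ^ 2 / M ^ 2) := by
        rw [prod_mul_distrib, prod_const, Nat.card_Icc, Real.exp_sum, Nat.add_sub_cancel]
    _ ≤ ∏ i ∈ Icc 1 d, (M ^ 2 - (i : ℝ) ^ 2) := by
        refine prod_le_prod (fun _ _ => by positivity) fun i hi => sq_mul_exp_le_sq_sub_sq hM ?_
        have : (i : ℝ) ≤ d := by exact_mod_cast (mem_Icc.1 hi).2
        nlinarith [(Nat.cast_nonneg i : (0 : ℝ) ≤ i)]

theorem stmt6_general (d : ℕ) (M : ℝ) (hM : 0 < M) (hdM : (d : ℝ) ≤ M / 2) :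
    (M / 4) ^ (2 * d + 1) * Real.exp (-2 * (d : ℝ) ^ 3 / M ^ 2) ≤
      ((Nat.choose (2 * d) d : ℝ))⁻¹ ^ 2 *
        (M * ∏ i ∈ Finset.Icc 1 d, (M ^ 2 - (i : ℝ) ^ 2)) / (2 * (d : ℝ) + 1) := by
  set C : ℝ := (Nat.choose (2 * d) d : ℝ)
  have hC : 0 < C := by simpa [C] using Nat.choose_pos (Nat.le_mul_of_pos_left d two_pos)
  have hbinom := two_mul_add_one_mul_choose_sq_le_four_pow d
  have hprod := pow_mul_exp_le_prod_sq_sub_sq d hM <| by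
    nlinarith [(Nat.cast_nonneg d : (0 : ℝ) ≤ d)]
  calc (M / 4) ^ (2 * d + 1) * Real.exp (-2 * (d : ℝ) ^ 3 / M ^ 2)
      = M * ((M ^ 2) ^ d * Real.exp (-2 * (d : ℝ) ^ 3 / M ^ 2)) / 4 ^ (2 * d + 1) := by
        rw [div_pow, pow_succ', pow_mul]; ring
    _ ≤ M * ((M ^ 2) ^ d * Real.exp (-2 * (d : ℝ) ^ 3 / M ^ 2)) / ((2 * d + 1) * C ^ 2) := by
        gcongr
    _ = C⁻¹ ^ 2 * (M * ((M ^ 2) ^ d * Real.exp (-2 * (d : ℝ) ^ 3 / M ^ 2))) / (2 * d + 1) := by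
        field_simp
    _ ≤ C⁻¹ ^ 2 * (M * ∏ i ∈ Icc 1 d, (M ^ 2 - (i : ℝ) ^ 2)) / (2 * d + 1) := by gcongr

theorem stmt6 (d : ℕ) (hd : 1 ≤ d) (M : ℝ) (hM : 0 < M) (hdM : (d : ℝ) ≤ M / 2)
    (hq : ∀ i : ℕ, i ≤ d → (i : ℝ) / M ≤ 1 / 4) :
    (M / 4) ^ (2 * d + 1) * Real.exp (-2 * (d : ℝ) ^ 3 / M ^ 2) ≤
      ((Nat.choose (2 * d) d : ℝ))⁻¹ ^ 2 *
        (M * ∏ i ∈ Finset.Icc 1 d, (M ^ 2 - (i : ℝ) ^ 2)) / (2 * (d : ℝ) + 1) :=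
  stmt6_general d M hM hdM
end

section
/- Let n be a positive integer, 0 < p < 1, N = np(1-p) - 1 > 0, μ = ⌊pn⌋, and let ℓ be an integer with 1 ≤ ℓ ≤ μ/2. Then P(X = μ) ≤ exp(8ℓ²/N) · P(X = μ - ℓ), where X ~ Bin(n,p). -/
/-!
Consecutive binomial probabilities satisfy `(k + 1)(1 - p) P(k + 1) = (n - k) p P(k)`.
For `μ - ℓ ≤ k`, where `μ = ⌊pn⌋` and `2ℓ ≤ μ`, one has `(n - k) p ≤ (k + 1)(1 - p) + ℓ + 1`
and `N ≤ 2 (k + 1)(1 - p)`, so each ratio `P(k + 1) / P(k)` is at most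
`1 + 2(ℓ + 1)/N ≤ exp (2(ℓ + 1)/N)`. Going up the `ℓ` steps from `μ - ℓ` to `μ` therefore
costs at most `exp (2ℓ(ℓ + 1)/N) ≤ exp (8ℓ²/N)`.
-/

open Real

noncomputable def binomPMF (n : ℕ) (p : ℝ) (k : ℕ) : ℝ :=
  n.choose k * p ^ k * (1 - p) ^ (n - k)

namespace binomPMF

variable {n : ℕ} {p : ℝ}

lemma nonneg (hp0 : 0 ≤ p) (hp1 : p ≤ 1) (k : ℕ) : 0 ≤ binomPMF n p k := by
  unfold binomPMF
  have : 0 ≤ 1 - p := by linarith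
  positivity

lemma succ_mul_eq (k : ℕ) :
    ((k : ℝ) + 1) * (1 - p) * binomPMF n p (k + 1) = ((n : ℝ) - k) * p * binomPMF n p k := by
  unfold binomPMF
  rcases lt_or_ge k n with hkn | hnk
  · have hchoose : (n.choose (k + 1) : ℝ) * ((k : ℝ) + 1) = n.choose k * ((n : ℝ) - k) := by
      have h := congrArg (Nat.cast (R := ℝ)) (Nat.choose_succ_right_eq n k)
      push_cast [Nat.cast_sub hkn.le] at h
      exact h
    rw [show n - k = n - (k + 1) + 1 by omega, pow_succ, pow_succ]
    linear_combination ((1 - p) * (p ^ k * p) * (1 - p) ^ (n - (k + 1))) * hchoose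
  · rw [Nat.choose_eq_zero_of_lt (by omega : n < k + 1)]
    rcases hnk.eq_or_lt with rfl | hnk
    · simp
    · simp [Nat.choose_eq_zero_of_lt hnk]

lemma succ_le_mul_of_mul_le (hp0 : 0 ≤ p) (hp1 : p < 1) {k : ℕ} {c : ℝ}
    (h : ((n : ℝ) - k) * p ≤ c * (((k : ℝ) + 1) * (1 - p))) :
    binomPMF n p (k + 1) ≤ c * binomPMF n p k := by
  have hpos : 0 < ((k : ℝ) + 1) * (1 - p) := by
    have : 0 < 1 - p := by linarith
    positivity
  refine le_of_mul_le_mul_left ?_ hpos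
  calc ((k : ℝ) + 1) * (1 - p) * binomPMF n p (k + 1)
      = ((n : ℝ) - k) * p * binomPMF n p k := succ_mul_eq k
    _ ≤ c * (((k : ℝ) + 1) * (1 - p)) * binomPMF n p k :=
        mul_le_mul_of_nonneg_right h (nonneg hp0 hp1.le k)
    _ = ((k : ℝ) + 1) * (1 - p) * (c * binomPMF n p k) := by ring

end binomPMF

lemma le_pow_mul_of_succ_le_mul {α : Type*} [Semiring α] [PartialOrder α] [IsOrderedRing α]
    {f : ℕ → α} {c : α} (hc : 0 ≤ c) (a : ℕ) :
    ∀ ℓ, (∀ k, a ≤ k → k < a + ℓ → f (k + 1) ≤ c * f k) → f (a + ℓ) ≤ c ^ ℓ * f a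
  | 0, _ => by simp
  | ℓ + 1, h => calc
      f (a + ℓ + 1) ≤ c * f (a + ℓ) := h _ (by omega) (by omega)
      _ ≤ c * (c ^ ℓ * f a) := mul_le_mul_of_nonneg_left
          (le_pow_mul_of_succ_le_mul hc a ℓ fun k hk _ => h k hk (by omega)) hc
      _ = c ^ (ℓ + 1) * f a := by rw [pow_succ', mul_assoc]

lemma binomPMF_succ_le_exp_mul_near_floor {n k ℓ : ℕ} {p : ℝ} (hp0 : 0 < p) (hp1 : p < 1)
    (hN : 0 < (n : ℝ) * p * (1 - p) - 1) (hℓ : 2 * ℓ ≤ ⌊p * n⌋₊) (hk : ⌊p * n⌋₊ ≤ k + ℓ) :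
    binomPMF n p (k + 1) ≤
      exp (2 * ((ℓ : ℝ) + 1) / ((n : ℝ) * p * (1 - p) - 1)) * binomPMF n p k := by
  set N := (n : ℝ) * p * (1 - p) - 1
  set μ := ⌊p * n⌋₊
  set s := 2 * ((ℓ : ℝ) + 1) / N
  have hq : 0 < 1 - p := by linarith
  have hμ_gt : p * n < μ + 1 := Nat.lt_floor_add_one _
  have hℓ' : 2 * (ℓ : ℝ) ≤ μ := by exact_mod_cast hℓ
  have hk' : (μ : ℝ) ≤ k + ℓ := by exact_mod_cast hk
  have hmode : ((n : ℝ) - k) * p ≤ ((k : ℝ) + 1) * (1 - p) + (ℓ + 1) := by nlinarith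
  have hN_le : N ≤ 2 * (((k : ℝ) + 1) * (1 - p)) := by nlinarith
  have hsN : s * N = 2 * ((ℓ : ℝ) + 1) := div_mul_cancel₀ _ hN.ne'
  refine binomPMF.succ_le_mul_of_mul_le hp0.le hp1 ?_
  calc ((n : ℝ) - k) * p ≤ (s + 1) * (((k : ℝ) + 1) * (1 - p)) := by
        nlinarith [mul_le_mul_of_nonneg_left hN_le (by positivity : 0 ≤ s)]
    _ ≤ exp s * (((k : ℝ) + 1) * (1 - p)) := by
        gcongr
        exact add_one_le_exp s

theorem stmt8_general (n : ℕ) (p : ℝ) (hp0 : 0 < p) (hp1 : p < 1)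
    (hN : 0 < (n : ℝ) * p * (1 - p) - 1)
    (ℓ : ℕ)
    (hℓ : (ℓ : ℝ) ≤ (⌊p * n⌋₊ : ℝ) / 2) :
    (n.choose ⌊p * n⌋₊ : ℝ) * p ^ ⌊p * n⌋₊ * (1 - p) ^ (n - ⌊p * n⌋₊) ≤
      Real.exp (8 * (ℓ : ℝ) ^ 2 / ((n : ℝ) * p * (1 - p) - 1)) *
        ((n.choose (⌊p * n⌋₊ - ℓ) : ℝ) * p ^ (⌊p * n⌋₊ - ℓ) * (1 - p) ^ (n - (⌊p * n⌋₊ - ℓ))) := by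
  change binomPMF n p ⌊p * n⌋₊ ≤ _ * binomPMF n p (⌊p * n⌋₊ - ℓ)
  have h2ℓ : 2 * ℓ ≤ ⌊p * n⌋₊ := by exact_mod_cast (by linarith : (2 * ℓ : ℝ) ≤ ⌊p * n⌋₊)
  set s := 2 * ((ℓ : ℝ) + 1) / ((n : ℝ) * p * (1 - p) - 1) with hs
  have hchain := le_pow_mul_of_succ_le_mul (f := binomPMF n p) (exp_pos s).le (⌊p * n⌋₊ - ℓ) ℓ
    fun k hk _ => binomPMF_succ_le_exp_mul_near_floor hp0 hp1 hN h2ℓ (by omega)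
  rw [Nat.sub_add_cancel (by omega), ← exp_nat_mul] at hchain
  refine hchain.trans (mul_le_mul_of_nonneg_right ?_ (binomPMF.nonneg hp0.le hp1.le _))
  rw [exp_le_exp, hs, ← mul_div_assoc]
  gcongr ?_ / _
  nlinarith [(by exact_mod_cast Nat.le_self_pow two_ne_zero ℓ : (ℓ : ℝ) ≤ ℓ ^ 2)]

theorem stmt8 (n : ℕ) (hn : 0 < n) (p : ℝ) (hp0 : 0 < p) (hp1 : p < 1)
    (hN : 0 < (n : ℝ) * p * (1 - p) - 1)
    (ℓ : ℕ) (hℓ1 : 1 ≤ ℓ)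
    (hℓ : (ℓ : ℝ) ≤ (⌊p * n⌋₊ : ℝ) / 2) :
    (n.choose ⌊p * n⌋₊ : ℝ) * p ^ ⌊p * n⌋₊ * (1 - p) ^ (n - ⌊p * n⌋₊) ≤
      Real.exp (8 * (ℓ : ℝ) ^ 2 / ((n : ℝ) * p * (1 - p) - 1)) *
        ((n.choose (⌊p * n⌋₊ - ℓ) : ℝ) * p ^ (⌊p * n⌋₊ - ℓ) * (1 - p) ^ (n - (⌊p * n⌋₊ - ℓ))) :=
  stmt8_general n p hp0 hp1 hN ℓ hℓ
end
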